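/- The function M(s) = s²/2 + (M_s/γ)(ln(sinh(γs)) - ln s - ln γ) (extended by M(0)=0) is a convex function on (0,∞), and it is a primitive of s·μ(s) where μ is the Langevin law. -/

import Mathlib

/-!
Differentiating, `M'(s) = s + Ms L(γ s) = s μ(s)` with `L(x) = coth x - 1/x` the Langevin function.
Since `L'(x) = 1/x² - 1/sinh² x` and `sinh x > x` for `x > 0`, `L` is increasing on `(0, ∞)`,
hence so is `M'`, and `M` is convex there.
-/

open Real Set

noncomputable def langevin (x : ℝ) : ℝ := cosh x / sinh x - 1 / x

theorem hasDerivAt_langevin {x : ℝ} (hx : x ≠ 0) :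
    HasDerivAt langevin (1 / x ^ 2 - 1 / sinh x ^ 2) x := by
  have hsinh : sinh x ≠ 0 := sinh_ne_zero.mpr hx
  refine (((hasDerivAt_cosh x).div (hasDerivAt_sinh x) hsinh).sub
    ((hasDerivAt_const x 1).div (hasDerivAt_id x) hx)).congr_deriv ?_
  simp only [id]
  field_simp
  linear_combination -x ^ 2 * cosh_sq_sub_sinh_sq x

theorem one_div_sinh_sq_lt_one_div_sq {x : ℝ} (hx : 0 < x) : 1 / sinh x ^ 2 < 1 / x ^ 2 := by
  have := self_lt_sinh_iff.mpr hx
  gcongr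

theorem strictMonoOn_langevin : StrictMonoOn langevin (Ioi 0) :=
  strictMonoOn_of_hasDerivWithinAt_pos (convex_Ioi 0)
    (fun x hx => (hasDerivAt_langevin (ne_of_gt hx)).continuousAt.continuousWithinAt)
    (fun x hx => by
      rw [interior_Ioi] at hx
      exact (hasDerivAt_langevin (ne_of_gt hx)).hasDerivWithinAt)
    (fun x hx => by
      rw [interior_Ioi] at hx
      exact sub_pos.mpr (one_div_sinh_sq_lt_one_div_sq hx))

theorem hasDerivAt_langevin_primitive (Ms : ℝ) {γ s : ℝ} (hγ : γ ≠ 0) (hs : s ≠ 0) :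
    HasDerivAt (fun s => s ^ 2 / 2 + (Ms / γ) * (log (sinh (γ * s)) - log s - log γ))
      (s + Ms * langevin (γ * s)) s := by
  have hγs : γ * s ≠ 0 := mul_ne_zero hγ hs
  have hsinh : sinh (γ * s) ≠ 0 := sinh_ne_zero.mpr hγs
  have hlog : HasDerivAt (fun s => log (sinh (γ * s))) (cosh (γ * s) * γ / sinh (γ * s)) s :=
    (((hasDerivAt_id s).const_mul γ).congr_deriv (mul_one γ)).sinh.log hsinh
  refine (((hasDerivAt_pow 2 s).div_const 2).add
    (((hlog.sub (hasDerivAt_log hs)).sub_const (log γ)).const_mul (Ms / γ))).congr_deriv ?_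
  simp only [langevin]
  field_simp
  ring

theorem MonotoneOn.convexOn_of_hasDerivAt {D : Set ℝ} (hD : Convex ℝ D) (hDo : IsOpen D)
    {f f' : ℝ → ℝ} (hf : ∀ x ∈ D, HasDerivAt f (f' x) x) (hf' : MonotoneOn f' D) :
    ConvexOn ℝ D f := by
  have hderiv : D.EqOn (deriv f) f' := fun x hx => (hf x hx).deriv
  refine MonotoneOn.convexOn_of_deriv hD
    (fun x hx => (hf x hx).continuousAt.continuousWithinAt) ?_ ?_
  · rw [hDo.interior_eq]
    exact fun x hx => (hf x hx).differentiableAt.differentiableWithinAt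
  · rw [hDo.interior_eq]
    exact hf'.congr hderiv.symm

theorem langevin_M_convex_primitive_general (Ms γ : ℝ) (hMs : 0 < Ms) (hγ : 0 < γ)
    (μ : ℝ → ℝ)
    (hμ : ∀ s : ℝ, 0 < s →
      μ s = 1 + (Ms / s) * (Real.cosh (γ * s) / Real.sinh (γ * s) - 1 / (γ * s)))
    (M : ℝ → ℝ)
    (hMdef : ∀ s : ℝ, 0 < s →
      M s = s ^ 2 / 2 + (Ms / γ) * (Real.log (Real.sinh (γ * s)) - Real.log s - Real.log γ)) :
    ConvexOn ℝ (Set.Ioi (0:ℝ)) M ∧ ∀ s : ℝ, 0 < s → HasDerivAt M (s * μ s) s := by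
  have hderiv : ∀ s ∈ Ioi (0 : ℝ), HasDerivAt M (s + Ms * langevin (γ * s)) s := fun s hs =>
    (hasDerivAt_langevin_primitive Ms hγ.ne' (ne_of_gt hs)).congr_of_eventuallyEq
      (Filter.eventually_of_mem (Ioi_mem_nhds hs) hMdef)
  have hmono : MonotoneOn (fun s => s + Ms * langevin (γ * s)) (Ioi 0) :=
    fun x hx y hy hxy => add_le_add hxy <| mul_le_mul_of_nonneg_left
      (strictMonoOn_langevin.monotoneOn (mul_pos hγ hx) (mul_pos hγ hy) (by gcongr)) hMs.le
  refine ⟨hmono.convexOn_of_hasDerivAt (convex_Ioi 0) isOpen_Ioi hderiv, fun s hs => ?_⟩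
  convert hderiv s hs using 1
  rw [hμ s hs, langevin]
  field_simp

/-- The explicit primitive `M(s) = s²/2 + (Ms/γ)(ln sinh(γs) - ln s - ln γ)` is convex on
`(0,∞)` and is a primitive of `s·μ(s)`, where `μ` is the Langevin law. -/
theorem langevin_M_convex_primitive (Ms γ : ℝ) (hMs : 0 < Ms) (hγ : 0 < γ)
    (μ : ℝ → ℝ)
    (hμ : ∀ s : ℝ, 0 < s →
      μ s = 1 + (Ms / s) * (Real.cosh (γ * s) / Real.sinh (γ * s) - 1 / (γ * s)))
    (M : ℝ → ℝ)
    (hMdef : ∀ s : ℝ, 0 < s →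
      M s = s ^ 2 / 2 + (Ms / γ) * (Real.log (Real.sinh (γ * s)) - Real.log s - Real.log γ))
    (hM0 : M 0 = 0) :
    ConvexOn ℝ (Set.Ioi (0:ℝ)) M ∧ ∀ s : ℝ, 0 < s → HasDerivAt M (s * μ s) s :=
  langevin_M_convex_primitive_general Ms γ hMs hγ μ hμ M hMdef
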